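/- Formula equivalence (equality up to renaming of bound variables) is symmetric: for all formulas α and α', if α ≈ α' then α' ≈ α. -/

import Mathlib

/-- Variables, indexed by natural numbers. -/
structure FOVar where
  idx : ℕ
deriving DecidableEq

/-- Function symbols: an index and an arity. -/
structure FOFunc where
  idx : ℕ
  arity : ℕ
deriving DecidableEq

/-- Relation symbols: an index and an arity. -/
structure FORel where
  idx : ℕ
  arity : ℕ
deriving DecidableEq

/-- Length-indexed vectors. -/
inductive Vec (A : Type) : ℕ → Type where
  | nil : Vec A 0
  | cons : ∀ {n}, A → Vec A n → Vec A (n + 1)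

/-- A predicate holds on every element of a vector. -/
inductive Vec.All {A : Type} (P : A → Prop) : ∀ {n}, Vec A n → Prop where
  | nil : Vec.All P Vec.nil
  | cons : ∀ {n x} {xs : Vec A n}, P x → Vec.All P xs → Vec.All P (Vec.cons x xs)

/-- First-order terms. -/
inductive Term : Type where
  | varterm : FOVar → Term
  | functerm : (f : FOFunc) → Vec Term f.arity → Term

/-- First-order formulas. -/
inductive Formula : Type where
  | atom : (r : FORel) → Vec Term r.arity → Formula
  | imp : Formula → Formula → Formula
  | and : Formula → Formula → Formula
  | or : Formula → Formula → Formula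
  | all : FOVar → Formula → Formula
  | ex : FOVar → Formula → Formula

/-- The variable x does not occur in a term. -/
inductive NotInTerm (x : FOVar) : Term → Prop where
  | varterm : ∀ {y}, x ≠ y → NotInTerm x (Term.varterm y)
  | functerm : ∀ {f} {us : Vec Term f.arity},
      Vec.All (NotInTerm x) us → NotInTerm x (Term.functerm f us)

/-- The variable x does not occur in any term of a vector. -/
def NotInTerms {n : ℕ} (x : FOVar) (ts : Vec Term n) : Prop :=
  Vec.All (NotInTerm x) ts

/-- The variable x is not free in a formula. -/
inductive NotFreeIn : FOVar → Formula → Prop where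
  | atom : ∀ {x r} {ts : Vec Term r.arity},
      NotInTerms x ts → NotFreeIn x (Formula.atom r ts)
  | imp : ∀ {x α β}, NotFreeIn x α → NotFreeIn x β → NotFreeIn x (Formula.imp α β)
  | and : ∀ {x α β}, NotFreeIn x α → NotFreeIn x β → NotFreeIn x (Formula.and α β)
  | or : ∀ {x α β}, NotFreeIn x α → NotFreeIn x β → NotFreeIn x (Formula.or α β)
  | all_self : ∀ x α, NotFreeIn x (Formula.all x α)
  | ex_self : ∀ x α, NotFreeIn x (Formula.ex x α)
  | all : ∀ {x α} (y : FOVar), NotFreeIn x α → NotFreeIn x (Formula.all y α)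
  | ex : ∀ {x α} (y : FOVar), NotFreeIn x α → NotFreeIn x (Formula.ex y α)

mutual
/-- ⟨u⟩[x/t]≡v : substituting t for x in the term u yields v. -/
inductive TermSub : Term → FOVar → Term → Term → Prop where
  | var_eq : ∀ {x t}, TermSub (Term.varterm x) x t t
  | var_ne : ∀ {x t y}, x ≠ y → TermSub (Term.varterm y) x t (Term.varterm y)
  | functerm : ∀ {x t f} {us vs : Vec Term f.arity},
      TermsSub us x t vs → TermSub (Term.functerm f us) x t (Term.functerm f vs)

/-- [us][x/t]≡vs : componentwise substitution in vectors of terms. -/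
inductive TermsSub : ∀ {n}, Vec Term n → FOVar → Term → Vec Term n → Prop where
  | nil : ∀ {x t}, TermsSub Vec.nil x t Vec.nil
  | cons : ∀ {x t u v n} {us vs : Vec Term n},
      TermSub u x t v → TermsSub us x t vs →
      TermsSub (Vec.cons u us) x t (Vec.cons v vs)
end

/-- α[x/t]≡β : substituting t for all free occurrences of x in α yields β. -/
inductive FormulaSub : Formula → FOVar → Term → Formula → Prop where
  | ident : ∀ α x, FormulaSub α x (Term.varterm x) α
  | notfree : ∀ {α x t}, NotFreeIn x α → FormulaSub α x t α
  | atom : ∀ {x t} (r : FORel) {us vs : Vec Term r.arity},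
      TermsSub us x t vs → FormulaSub (Formula.atom r us) x t (Formula.atom r vs)
  | imp : ∀ {α α' β β' x t}, FormulaSub α x t α' → FormulaSub β x t β' →
      FormulaSub (Formula.imp α β) x t (Formula.imp α' β')
  | and : ∀ {α α' β β' x t}, FormulaSub α x t α' → FormulaSub β x t β' →
      FormulaSub (Formula.and α β) x t (Formula.and α' β')
  | or : ∀ {α α' β β' x t}, FormulaSub α x t α' → FormulaSub β x t β' →
      FormulaSub (Formula.or α β) x t (Formula.or α' β')
  | all_self : ∀ {t} x α, FormulaSub (Formula.all x α) x t (Formula.all x α)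
  | ex_self : ∀ {t} x α, FormulaSub (Formula.ex x α) x t (Formula.ex x α)
  | all : ∀ {α β x y t}, x ≠ y → NotInTerm y t → FormulaSub α x t β →
      FormulaSub (Formula.all y α) x t (Formula.all y β)
  | ex : ∀ {α β x y t}, x ≠ y → NotInTerm y t → FormulaSub α x t β →
      FormulaSub (Formula.ex y α) x t (Formula.ex y β)

/-- The term t is free for the variable x in a formula. -/
inductive FreeFor (t : Term) (x : FOVar) : Formula → Prop where
  | notfree : ∀ {α}, NotFreeIn x α → FreeFor t x α
  | atom : ∀ r us, FreeFor t x (Formula.atom r us)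
  | imp : ∀ {α β}, FreeFor t x α → FreeFor t x β → FreeFor t x (Formula.imp α β)
  | and : ∀ {α β}, FreeFor t x α → FreeFor t x β → FreeFor t x (Formula.and α β)
  | or : ∀ {α β}, FreeFor t x α → FreeFor t x β → FreeFor t x (Formula.or α β)
  | all_self : ∀ α, FreeFor t x (Formula.all x α)
  | ex_self : ∀ α, FreeFor t x (Formula.ex x α)
  | all : ∀ {α y}, NotInTerm y t → FreeFor t x α → FreeFor t x (Formula.all y α)
  | ex : ∀ {α y}, NotInTerm y t → FreeFor t x α → FreeFor t x (Formula.ex y α)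

/-- The variable x appears nowhere (free or bound) in a formula. -/
inductive FreshIn (x : FOVar) : Formula → Prop where
  | atom : ∀ {r} {ts : Vec Term r.arity}, NotInTerms x ts → FreshIn x (Formula.atom r ts)
  | imp : ∀ {α β}, FreshIn x α → FreshIn x β → FreshIn x (Formula.imp α β)
  | and : ∀ {α β}, FreshIn x α → FreshIn x β → FreshIn x (Formula.and α β)
  | or : ∀ {α β}, FreshIn x α → FreshIn x β → FreshIn x (Formula.or α β)
  | all : ∀ {α y}, y ≠ x → FreshIn x α → FreshIn x (Formula.all y α)
  | ex : ∀ {α y}, y ≠ x → FreshIn x α → FreshIn x (Formula.ex y α)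

/-- Formula equivalence: equality up to renaming of bound variables. -/
inductive FormulaEquiv : Formula → Formula → Prop where
  | atom : ∀ r ts, FormulaEquiv (Formula.atom r ts) (Formula.atom r ts)
  | imp : ∀ {α β α' β'}, FormulaEquiv α α' → FormulaEquiv β β' →
      FormulaEquiv (Formula.imp α β) (Formula.imp α' β')
  | and : ∀ {α β α' β'}, FormulaEquiv α α' → FormulaEquiv β β' →
      FormulaEquiv (Formula.and α β) (Formula.and α' β')
  | or : ∀ {α β α' β'}, FormulaEquiv α α' → FormulaEquiv β β' →
      FormulaEquiv (Formula.or α β) (Formula.or α' β')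
  | all : ∀ {α α'} (x : FOVar), FormulaEquiv α α' → FormulaEquiv (Formula.all x α) (Formula.all x α')
  | ex : ∀ {α α'} (x : FOVar), FormulaEquiv α α' → FormulaEquiv (Formula.ex x α) (Formula.ex x α')
  | all_rename : ∀ {α β β' x y}, NotFreeIn y α →
      FormulaSub α x (Term.varterm y) β → FormulaEquiv β β' →
      FormulaEquiv (Formula.all x α) (Formula.all y β')
  | ex_rename : ∀ {α β β' x y}, NotFreeIn y α →
      FormulaSub α x (Term.varterm y) β → FormulaEquiv β β' →
      FormulaEquiv (Formula.ex x α) (Formula.ex y β')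
  | all_rename' : ∀ {α α' β' x y}, FormulaEquiv α α' → NotFreeIn y α' →
      FormulaSub α' x (Term.varterm y) β' →
      FormulaEquiv (Formula.all x α) (Formula.all y β')
  | ex_rename' : ∀ {α α' β' x y}, FormulaEquiv α α' → NotFreeIn y α' →
      FormulaSub α' x (Term.varterm y) β' →
      FormulaEquiv (Formula.ex x α) (Formula.ex y β')

/-- Natural deduction for minimal first-order logic. -/
inductive Deduction : Set Formula → Formula → Prop where
  | assume : ∀ (α : Formula), Deduction {α} α
  | close : ∀ {Γ Δ : Set Formula} {α}, Γ ⊆ Δ → Deduction Γ α → Deduction Δ α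
  | arrowintro : ∀ {Γ β} (α : Formula), Deduction Γ β →
      Deduction (Γ \ {α}) (Formula.imp α β)
  | arrowelim : ∀ {Γ₁ Γ₂ α β}, Deduction Γ₁ (Formula.imp α β) → Deduction Γ₂ α →
      Deduction (Γ₁ ∪ Γ₂) β
  | conjintro : ∀ {Γ₁ Γ₂ α β}, Deduction Γ₁ α → Deduction Γ₂ β →
      Deduction (Γ₁ ∪ Γ₂) (Formula.and α β)
  | conjelim : ∀ {Γ₁ Γ₂ α β γ}, Deduction Γ₁ (Formula.and α β) → Deduction Γ₂ γ →
      Deduction (Γ₁ ∪ (Γ₂ \ {α, β})) γ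
  | disjintro1 : ∀ {Γ α} (β : Formula), Deduction Γ α → Deduction Γ (Formula.or α β)
  | disjintro2 : ∀ {Γ β} (α : Formula), Deduction Γ β → Deduction Γ (Formula.or α β)
  | disjelim : ∀ {Γ₁ Γ₂ Γ₃ α β γ}, Deduction Γ₁ (Formula.or α β) →
      Deduction Γ₂ γ → Deduction Γ₃ γ →
      Deduction (Γ₁ ∪ (Γ₂ \ {α}) ∪ (Γ₃ \ {β})) γ
  | univintro : ∀ {Γ α} (x : FOVar), (∀ γ ∈ Γ, NotFreeIn x γ) →
      Deduction Γ α → Deduction Γ (Formula.all x α)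
  | univelim : ∀ {Γ α x β} (t : Term), FormulaSub α x t β →
      Deduction Γ (Formula.all x α) → Deduction Γ β
  | existintro : ∀ {Γ α β} (t : Term) (x : FOVar), FormulaSub α x t β →
      Deduction Γ β → Deduction Γ (Formula.ex x α)
  | existelim : ∀ {Γ₁ Γ₂ α β x}, NotFreeIn x β → (∀ γ ∈ Γ₂ \ {α}, NotFreeIn x γ) →
      Deduction Γ₁ (Formula.ex x α) → Deduction Γ₂ β →
      Deduction (Γ₁ ∪ (Γ₂ \ {α})) β

/-- ⊥: the atom of a fixed nullary relation symbol. -/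
def Formula.bot : Formula := Formula.atom ⟨0, 0⟩ Vec.nil

/-- ¬α is α ⇒ ⊥. -/
def Formula.neg (α : Formula) : Formula := Formula.imp α Formula.bot

/-!
Each renaming rule is undone by the other one with `x` and `y` exchanged: if `y` is not free
in `α`, `x ≠ y` and `α[x/y] ≡ β`, then `x` is not free in `β` and `β[y/x] ≡ α`. When `x = y`
the substitution changes nothing, and the renaming step is an instance of the congruence rule.
-/

mutual
theorem TermSub.eq_of_rename_self : ∀ {u : Term} {x v}, TermSub u x (.varterm x) v → v = u
  | _, _, _, .var_eq => rfl
  | _, _, _, .var_ne _ => rfl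
  | _, _, _, .functerm h => by rw [h.eq_of_rename_self]

theorem TermsSub.eq_of_rename_self : ∀ {n} {us : Vec Term n} {x vs},
    TermsSub us x (.varterm x) vs → vs = us
  | _, _, _, _, .nil => rfl
  | _, _, _, _, .cons h hs => by rw [h.eq_of_rename_self, hs.eq_of_rename_self]
end

mutual
theorem TermSub.notInTerm_of_rename : ∀ {u : Term} {x y v}, x ≠ y →
    TermSub u x (.varterm y) v → NotInTerm x v
  | _, _, _, _, hxy, .var_eq => .varterm hxy
  | _, _, _, _, _, .var_ne hne => .varterm hne
  | _, _, _, _, hxy, .functerm h => .functerm (h.notInTerms_of_rename hxy)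

theorem TermsSub.notInTerms_of_rename : ∀ {n} {us : Vec Term n} {x y vs}, x ≠ y →
    TermsSub us x (.varterm y) vs → NotInTerms x vs
  | _, _, _, _, _, _, .nil => .nil
  | _, _, _, _, _, hxy, .cons h hs =>
      .cons (h.notInTerm_of_rename hxy) (hs.notInTerms_of_rename hxy)
end

mutual
theorem TermSub.rename_symm : ∀ {u : Term} {x y v}, NotInTerm y u →
    TermSub u x (.varterm y) v → TermSub v y (.varterm x) u
  | _, _, _, _, _, .var_eq => .var_eq
  | _, _, _, _, .varterm hne, .var_ne _ => .var_ne hne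
  | _, _, _, _, .functerm hy, .functerm h => .functerm (h.rename_symm hy)

theorem TermsSub.rename_symm : ∀ {n} {us : Vec Term n} {x y vs}, NotInTerms y us →
    TermsSub us x (.varterm y) vs → TermsSub vs y (.varterm x) us
  | _, _, _, _, _, _, .nil => .nil
  | _, _, _, _, _, .cons hy hys, .cons h hs => .cons (h.rename_symm hy) (hs.rename_symm hys)
end

theorem FormulaSub.eq_of_rename_self :
    ∀ {α x β}, FormulaSub α x (.varterm x) β → β = α
  | _, _, _, .ident .. | _, _, _, .notfree _ | _, _, _, .all_self .. | _, _, _, .ex_self .. => rfl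
  | _, _, _, .atom _ h => by rw [h.eq_of_rename_self]
  | _, _, _, .imp h₁ h₂ | _, _, _, .and h₁ h₂ | _, _, _, .or h₁ h₂ => by
      rw [h₁.eq_of_rename_self, h₂.eq_of_rename_self]
  | _, _, _, .all _ _ h | _, _, _, .ex _ _ h => by rw [h.eq_of_rename_self]

theorem FormulaSub.notFreeIn_of_rename :
    ∀ {α x y β}, x ≠ y → FormulaSub α x (.varterm y) β → NotFreeIn x β
  | _, _, _, _, hxy, .ident .. => absurd rfl hxy
  | _, _, _, _, _, .notfree hx => hx
  | _, _, _, _, hxy, .atom _ h => .atom (h.notInTerms_of_rename hxy)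
  | _, _, _, _, hxy, .imp h₁ h₂ =>
      .imp (h₁.notFreeIn_of_rename hxy) (h₂.notFreeIn_of_rename hxy)
  | _, _, _, _, hxy, .and h₁ h₂ =>
      .and (h₁.notFreeIn_of_rename hxy) (h₂.notFreeIn_of_rename hxy)
  | _, _, _, _, hxy, .or h₁ h₂ =>
      .or (h₁.notFreeIn_of_rename hxy) (h₂.notFreeIn_of_rename hxy)
  | _, _, _, _, _, .all_self x α => .all_self x α
  | _, _, _, _, _, .ex_self x α => .ex_self x α
  | _, _, _, _, hxy, .all _ _ h => .all _ (h.notFreeIn_of_rename hxy)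
  | _, _, _, _, hxy, .ex _ _ h => .ex _ (h.notFreeIn_of_rename hxy)

theorem FormulaSub.rename_symm :
    ∀ {α x y β}, NotFreeIn y α → FormulaSub α x (.varterm y) β → FormulaSub β y (.varterm x) α
  | _, _, _, _, _, .ident α _ => .ident α _
  | _, _, _, _, hy, .notfree _ | _, _, _, _, hy, .all_self .. | _, _, _, _, hy, .ex_self .. =>
      .notfree hy
  | _, _, _, _, .atom hy, .atom _ h => .atom _ (h.rename_symm hy)
  | _, _, _, _, .imp hy₁ hy₂, .imp h₁ h₂ => .imp (h₁.rename_symm hy₁) (h₂.rename_symm hy₂)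
  | _, _, _, _, .and hy₁ hy₂, .and h₁ h₂ => .and (h₁.rename_symm hy₁) (h₂.rename_symm hy₂)
  | _, _, _, _, .or hy₁ hy₂, .or h₁ h₂ => .or (h₁.rename_symm hy₁) (h₂.rename_symm hy₂)
  | _, _, _, _, .all_self .., .all _ (.varterm hyz) _ => absurd rfl hyz
  | _, _, _, _, .all _ hy, .all hxz (.varterm hyz) h =>
      .all hyz.symm (.varterm hxz.symm) (h.rename_symm hy)
  | _, _, _, _, .ex_self .., .ex _ (.varterm hyz) _ => absurd rfl hyz
  | _, _, _, _, .ex _ hy, .ex hxz (.varterm hyz) h =>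
      .ex hyz.symm (.varterm hxz.symm) (h.rename_symm hy)

theorem FormulaSub.eq_or_rename_symm {α β : Formula} {x y : FOVar} (hy : NotFreeIn y α)
    (h : FormulaSub α x (.varterm y) β) :
    (x = y ∧ β = α) ∨ (NotFreeIn x β ∧ FormulaSub β y (.varterm x) α) := by
  by_cases hxy : x = y
  · subst hxy
    exact .inl ⟨rfl, h.eq_of_rename_self⟩
  · exact .inr ⟨h.notFreeIn_of_rename hxy, h.rename_symm hy⟩

/-- Formula equivalence is symmetric. -/
theorem formulaEquiv_symm {α α' : Formula} (h : FormulaEquiv α α') :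
    FormulaEquiv α' α := by
  induction h with
  | atom r ts => exact .atom r ts
  | imp _ _ ih₁ ih₂ => exact .imp ih₁ ih₂
  | and _ _ ih₁ ih₂ => exact .and ih₁ ih₂
  | or _ _ ih₁ ih₂ => exact .or ih₁ ih₂
  | all x _ ih => exact .all x ih
  | ex x _ ih => exact .ex x ih
  | all_rename hy h _ ih =>
      obtain ⟨rfl, rfl⟩ | ⟨hx, h'⟩ := h.eq_or_rename_symm hy
      exacts [.all _ ih, .all_rename' ih hx h']
  | ex_rename hy h _ ih =>
      obtain ⟨rfl, rfl⟩ | ⟨hx, h'⟩ := h.eq_or_rename_symm hy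
      exacts [.ex _ ih, .ex_rename' ih hx h']
  | all_rename' _ hy h ih =>
      obtain ⟨rfl, rfl⟩ | ⟨hx, h'⟩ := h.eq_or_rename_symm hy
      exacts [.all _ ih, .all_rename hx h' ih]
  | ex_rename' _ hy h ih =>
      obtain ⟨rfl, rfl⟩ | ⟨hx, h'⟩ := h.eq_or_rename_symm hy
      exacts [.ex _ ih, .ex_rename hx h' ih]
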